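/- If every production of a grammar G whose right-hand side contains s_b also contains a matching e_b after it (formally: every production right-hand side, with nonterminals deleted, is a balanced string over {s_b, e_b}), and every nonterminal's terminal derivations preserve this, then every w ∈ L(G) is balanced with respect to s_b and e_b. -/

import Mathlib

/-- A string over `T` is balanced w.r.t. block delimiters `sb`, `eb` if every prefix has
at least as many `sb`s as `eb`s and the total counts are equal. -/
def BlockBalanced {T : Type} [DecidableEq T] (sb eb : T) (w : List T) : Prop :=
  (∀ p : List T, p <+: w → p.count eb ≤ p.count sb) ∧ w.count sb = w.count eb

/-- Projection of a sentential form: delete nonterminals and all terminals other than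
`sb` and `eb`. -/
def proj {T N : Type} [DecidableEq T] (sb eb : T) (β : List (Symbol T N)) : List T :=
  β.filterMap fun s =>
    match s with
    | .terminal t => if t = sb ∨ t = eb then some t else none
    | .nonterminal _ => none

/-!
A derivation step replaces a nonterminal, whose projection is empty, by a right-hand side
whose projection is balanced. Inserting a balanced word anywhere into a balanced word leaves it
balanced, so every sentential form derived from the start symbol has balanced projection; a word
of the language is one of them.
-/

theorem List.prefix_append_iff {α : Type*} {p a b : List α} :
    p <+: a ++ b ↔ p <+: a ∨ ∃ q, p = a ++ q ∧ q <+: b := by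
  constructor
  · intro h
    rcases le_or_gt p.length a.length with hle | hlt
    · exact Or.inl (List.prefix_of_prefix_length_le h (a.prefix_append b) hle)
    · obtain ⟨q, rfl⟩ := List.prefix_of_prefix_length_le (a.prefix_append b) h hlt.le
      exact Or.inr ⟨q, rfl, (List.prefix_append_right_inj a).mp h⟩
  · rintro (hpa | ⟨q, rfl, hqb⟩)
    · exact hpa.trans (a.prefix_append b)
    · exact (List.prefix_append_right_inj a).mpr hqb

section BlockBalanced

variable {T : Type} [DecidableEq T] {sb eb : T}

theorem blockBalanced_nil : BlockBalanced sb eb [] :=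
  ⟨fun p hp => by rw [List.prefix_nil.mp hp]; rfl, rfl⟩

theorem BlockBalanced.insert {a b c : List T} (hac : BlockBalanced sb eb (a ++ c))
    (hb : BlockBalanced sb eb b) : BlockBalanced sb eb (a ++ b ++ c) := by
  obtain ⟨hac_prefix, hac_count⟩ := hac
  obtain ⟨hb_prefix, hb_count⟩ := hb
  refine ⟨fun p hp => ?_, by simp only [List.count_append] at hac_count ⊢; omega⟩
  rw [List.append_assoc] at hp
  rcases List.prefix_append_iff.mp hp with hpa | ⟨q, rfl, hq⟩
  · exact hac_prefix p (hpa.trans (a.prefix_append c))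
  rcases List.prefix_append_iff.mp hq with hqb | ⟨r, rfl, hr⟩
  · have ha := hac_prefix a (a.prefix_append c)
    have hq := hb_prefix q hqb
    simp only [List.count_append]
    omega
  · have har := hac_prefix (a ++ r) (List.prefix_append_iff.mpr (Or.inr ⟨r, rfl, hr⟩))
    simp only [List.count_append] at har ⊢
    omega

end BlockBalanced

section proj

variable {T N : Type} [DecidableEq T] (sb eb : T)

@[simp]
theorem proj_append (u v : List (Symbol T N)) :
    proj sb eb (u ++ v) = proj sb eb u ++ proj sb eb v :=
  List.filterMap_append ..

@[simp]
theorem proj_nonterminal (n : N) : proj (N := N) sb eb [.nonterminal n] = [] :=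
  rfl

end proj

namespace ContextFreeGrammar

variable {T : Type} [DecidableEq T] {g : ContextFreeGrammar T} {sb eb : T}
  {u v : List (Symbol T g.NT)}

theorem Produces.blockBalanced_proj
    (hrules : ∀ r ∈ g.rules, BlockBalanced sb eb (proj sb eb r.output))
    (huv : g.Produces u v) (hu : BlockBalanced sb eb (proj sb eb u)) :
    BlockBalanced sb eb (proj sb eb v) := by
  obtain ⟨r, hr, hrw⟩ := huv
  obtain ⟨p, q, rfl, rfl⟩ := r.rewrites_iff.mp hrw
  simp only [proj_append, proj_nonterminal, List.append_nil] at hu ⊢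
  exact hu.insert (hrules r hr)

theorem Derives.blockBalanced_proj
    (hrules : ∀ r ∈ g.rules, BlockBalanced sb eb (proj sb eb r.output))
    (huv : g.Derives u v) (hu : BlockBalanced sb eb (proj sb eb u)) :
    BlockBalanced sb eb (proj sb eb v) := by
  induction huv with
  | refl => exact hu
  | tail _ hstep ih => exact hstep.blockBalanced_proj hrules ih

end ContextFreeGrammar

theorem language_balanced_general {T : Type} [DecidableEq T] (g : ContextFreeGrammar T)
    (sb eb : T)
    (hrules : ∀ r ∈ g.rules, BlockBalanced sb eb (proj sb eb r.output))
    (w : List T) (hw : w ∈ g.language) :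
    BlockBalanced sb eb (proj (N := g.NT) sb eb (w.map Symbol.terminal)) := by
  have hstart : BlockBalanced sb eb (proj sb eb [Symbol.nonterminal g.initial]) := by
    rw [proj_nonterminal]
    exact blockBalanced_nil
  exact ((g.mem_language_iff w).mp hw).blockBalanced_proj hrules hstart

/-- If the projection of every production's right-hand side is balanced, then every word
of the language is balanced w.r.t. `s_b`, `e_b`. -/
theorem language_balanced {T : Type} [DecidableEq T] (g : ContextFreeGrammar T)
    (sb eb : T) (hne : sb ≠ eb)
    (hrules : ∀ r ∈ g.rules, BlockBalanced sb eb (proj sb eb r.output))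
    (w : List T) (hw : w ∈ g.language) :
    BlockBalanced sb eb (proj (N := g.NT) sb eb (w.map Symbol.terminal)) :=
  language_balanced_general g sb eb hrules w hw
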